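/- For the flat-centroaffine system a_t = b_x, b_t = c_x, c_t = ((bc+1)/a)_x on a ≠ 0, the symmetric matrix h with entries h₁₁ = c², h₁₂ = −1, h₁₃ = −ac, h₂₂ = 0, h₂₃ = 0, h₃₃ = a² satisfies both the Monge condition h_{mk,s} + h_{ks,m} + h_{ms,k} = 0 and the symmetry condition h_{im}V^m_j = h_{jm}V^m_i, where V = (b, c, (bc+1)/a). -/
import Mathlib


noncomputable def pd3 : Fin 3 → (ℝ → ℝ → ℝ → ℝ) → (ℝ → ℝ → ℝ → ℝ)
  | 0 => fun F a b c => deriv (fun s => F s b c) a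
  | 1 => fun F a b c => deriv (fun s => F a s c) b
  | 2 => fun F a b c => deriv (fun s => F a b s) c

/-- The Monge metric of the flat centroaffine system. -/
noncomputable def h (i j : Fin 3) : ℝ → ℝ → ℝ → ℝ :=
  fun a _b c =>
    !![c^2,  -1, -a*c;
       -1,    0,  0;
       -a*c,  0,  a^2] i j

/-- The velocity vector V = (b, c, (bc+1)/a). -/
noncomputable def V : Fin 3 → ℝ → ℝ → ℝ → ℝ :=
  fun m a b c => ![b, c, (b*c+1)/a] m

lemma dsq (x : ℝ) : deriv (fun s : ℝ => s^2) x = 2*x := by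
  simpa using ((hasDerivAt_id x).pow 2).deriv

lemma dmulr (k x : ℝ) : deriv (fun s : ℝ => s * k) x = k := by
  simpa using ((hasDerivAt_id x).mul_const k).deriv

lemma dmull (k x : ℝ) : deriv (fun s : ℝ => k * s) x = k := by
  simpa using ((hasDerivAt_id x).const_mul k).deriv

lemma dnegmulr (k x : ℝ) : deriv (fun s : ℝ => -s * k) x = -k := by
  have : (fun s : ℝ => -s * k) = fun s : ℝ => s * (-k) := by ext s; ring
  rw [this, dmulr]

lemma dnegmull (k x : ℝ) : deriv (fun s : ℝ => -k * s) x = -k := by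
  have : (fun s : ℝ => -k * s) = fun s : ℝ => (-k) * s := by ext s; ring
  rw [this, dmull]

lemma dinvV (b c a : ℝ) (ha : a ≠ 0) :
    deriv (fun s : ℝ => (b*c+1)/s) a = -(b*c+1)/a^2 := by
  simp only [div_eq_mul_inv, deriv_const_mul_field, deriv_inv]
  ring

lemma dV1 (a b c : ℝ) : deriv (fun s : ℝ => (s*c+1)/a) b = c/a := by
  simpa using (((hasDerivAt_id b).mul_const c).add_const 1).div_const a |>.deriv

lemma dV2 (a b c : ℝ) : deriv (fun s : ℝ => (b*s+1)/a) c = b/a := by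
  simpa using (((hasDerivAt_id c).const_mul b).add_const 1).div_const a |>.deriv

theorem stmt10 :
    (∀ m k s : Fin 3, ∀ a b c : ℝ, a ≠ 0 →
      pd3 s (h m k) a b c + pd3 m (h k s) a b c + pd3 k (h m s) a b c = 0) ∧
    (∀ i j : Fin 3, ∀ a b c : ℝ, a ≠ 0 →
      ∑ m : Fin 3, h i m a b c * pd3 j (V m) a b c =
      ∑ m : Fin 3, h j m a b c * pd3 i (V m) a b c) := by
  constructor
  · intro m k s a b c ha
    fin_cases m <;> fin_cases k <;> fin_cases s <;>
      simp [pd3, h, dsq, dmulr, dmull, dnegmulr, dnegmull] <;> ring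
  · intro i j a b c ha
    fin_cases i <;> fin_cases j <;>
      simp [pd3, h, V, Fin.sum_univ_three, dsq, dmulr, dmull, dnegmulr, dnegmull,
        dinvV _ _ _ ha, dV1, dV2] <;>
      field_simp <;> ring
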